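/- arXiv:1108.6217 — 3 statements merged into one kernel-verified Lean document; each statement's English description precedes it below -/
import Mathlib

section
/- Let X be a Banach space, φ ∈ C¹(X,ℝ), S ⊆ X, c ∈ ℝ, ε > 0 and δ > 0. Assume that for every u ∈ φ⁻¹([c−2ε, c+2ε]) with B_{2δ}(u) ∩ S ≠ ∅ one has ‖φ'(u)‖ ≥ 8ε/δ. Then there exists a homeomorphism η : X → X such that φ∘η ≤ φ, η(u) = u whenever φ(u) ∉ [c−2ε, c+2ε] or B_{2δ}(u) ∩ S = ∅, φ(η(u)) ≤ c−ε whenever u ∈ S and φ(u) ≤ c+ε, and ‖η(u)−u‖ ≤ δ for every u ∈ X. -/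
/-!
Glue constant almost-norming directions of `φ'` by a locally Lipschitz partition of unity into a
pseudo-gradient field `v` with `‖v‖ ≤ 1`, `φ' v ≥ 0` everywhere, `φ' v ≥ 4ε/δ` on
`φ⁻¹[c - ε, c + ε] ∩ S_δ`, and `v = 0` off `φ⁻¹(c - 2ε, c + 2ε) ∩ S_{2δ}`. Being bounded and locally
Lipschitz, `-v` has a global flow on the Banach space `X`, and `η` is its time-`δ/2` map, a
homeomorphism whose inverse is the time-`δ/2` map of `v`. Trajectories have speed at most `1`, so
`‖η u - u‖ ≤ δ/2`, and `φ` decreases along them. A trajectory starting at `u ∈ S` with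
`φ u ≤ c + ε` stays in `S_δ`, so while `φ ≥ c - ε` it loses `φ` at rate `4ε/δ`, that is `2ε` by time
`δ/2`.
-/

open Set Metric Filter Topology Function NNReal

section LocallyLipschitz

variable {α β E F : Type*} [PseudoMetricSpace α] [NormedAddCommGroup E] [NormedAddCommGroup F]

theorem LocallyLipschitz.comp_contDiffAt [NormedSpace ℝ E] [NormedSpace ℝ F] {f : α → E}
    {g : E → F} (hf : LocallyLipschitz f) (hg : ∀ x, ContDiffAt ℝ 1 g (f x)) :
    LocallyLipschitz (g ∘ f) := by
  intro x
  obtain ⟨Kg, t, ht, hgt⟩ := (hg x).exists_lipschitzOnWith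
  obtain ⟨Kf, s, hs, hfs⟩ := hf x
  exact ⟨Kg * Kf, s ∩ f ⁻¹' t, inter_mem hs (hf.continuous.continuousAt ht),
    hgt.comp (hfs.mono inter_subset_left) fun _ hy => hy.2⟩

theorem LocallyLipschitz.smul [NormedSpace ℝ E] {c : α → ℝ} {f : α → E} (hc : LocallyLipschitz c)
    (hf : LocallyLipschitz f) : LocallyLipschitz fun x => c x • f x :=
  (hc.prodMk hf).comp_contDiffAt (g := fun p : ℝ × E => p.1 • p.2)
    fun _ => (contDiff_fst.smul contDiff_snd).contDiffAt

theorem LocallyLipschitz.inv₀ {c : α → ℝ} (hc : LocallyLipschitz c) (h0 : ∀ x, c x ≠ 0) :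
    LocallyLipschitz fun x => (c x)⁻¹ :=
  hc.comp_contDiffAt fun x => contDiffAt_inv ℝ (h0 x)

theorem LocallyLipschitz.sum {ι : Type*} (s : Finset ι) {f : ι → α → E}
    (hf : ∀ i, LocallyLipschitz (f i)) : LocallyLipschitz fun x => ∑ i ∈ s, f i x := by
  classical
  induction s using Finset.induction_on with
  | empty => simpa using LocallyLipschitz.const (0 : E)
  | insert i s hi ih => simpa [Finset.sum_insert hi] using (hf i).add ih

theorem LocallyLipschitz.finsum {ι : Type*} {f : ι → α → E} (hf : ∀ i, LocallyLipschitz (f i))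
    (hfin : LocallyFinite fun i => support (f i)) : LocallyLipschitz fun x => ∑ᶠ i, f i x := by
  intro x
  obtain ⟨s, hs⟩ := finsum_eventually_eq_sum hfin x
  obtain ⟨K, t, ht, hK⟩ := LocallyLipschitz.sum s hf x
  refine ⟨K, t ∩ {y | ∑ᶠ i, f i y = ∑ i ∈ s, f i y}, inter_mem ht hs,
    fun y ⟨hyt, (hy : _ = _)⟩ z ⟨hzt, (hz : _ = _)⟩ => ?_⟩
  simpa only [hy, hz] using hK hyt hzt

/-- Take a Lebesgue number of a finite cover of `K` by open sets on which `f` is Lipschitz. -/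
theorem LocallyLipschitz.exists_forall_lipschitzOnWith_ball [PseudoEMetricSpace β] {f : α → β}
    (hf : LocallyLipschitz f) {K : Set α} (hK : IsCompact K) :
    ∃ r > 0, ∃ L, ∀ x ∈ K, LipschitzOnWith L f (ball x r) := by
  choose L U hU hLU using hf
  obtain ⟨s, hs⟩ := hK.elim_finite_subcover (fun x => interior (U x)) (fun _ => isOpen_interior)
    fun x _ => mem_iUnion.2 ⟨x, mem_interior_iff_mem_nhds.2 (hU x)⟩
  obtain ⟨r, hr, hball⟩ := lebesgue_number_lemma_of_metric (c := fun i : s => interior (U i)) hK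
    (fun _ => isOpen_interior) (by simpa [iUnion_subtype] using hs)
  refine ⟨r, hr, s.sup L, fun x hx => ?_⟩
  obtain ⟨i, hi⟩ := hball x hx
  exact ((hLU i).mono (hi.trans interior_subset)).weaken (Finset.le_sup i.2)

end LocallyLipschitz

section Selection

variable {X E : Type*} [PseudoMetricSpace X] [NormedAddCommGroup E] [NormedSpace ℝ E]

/-- A locally Lipschitz analogue of `exists_continuous_forall_mem_convex_of_local_const`. The
partition of unity is built from the `1`-Lipschitz functions `x ↦ infDist x (V i)ᶜ` of a locally
finite open refinement `V`. -/
theorem exists_locallyLipschitz_forall_mem_convex_of_local_const {t : X → Set E}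
    (ht : ∀ x, Convex ℝ (t x)) (H : ∀ x, ∃ c : E, ∀ᶠ y in 𝓝 x, c ∈ t y) :
    ∃ g : X → E, LocallyLipschitz g ∧ ∀ x, g x ∈ t x := by
  choose c hc using H
  choose U hUt hUo hxU using fun x => _root_.eventually_nhds_iff.mp (hc x)
  obtain ⟨V, hVo, hVcov, hVfin, hVU⟩ :=
    precise_refinement U hUo (iUnion_eq_univ_iff.2 fun x => ⟨x, hxU x⟩)
  by_cases hVuniv : ∃ i, V i = univ
  · obtain ⟨i, hi⟩ := hVuniv
    exact ⟨fun _ => c i, LocallyLipschitz.const _, fun x => hUt i x (hVU i (hi ▸ mem_univ x))⟩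
  push Not at hVuniv
  set ρ : X → X → ℝ := fun i x => infDist x (V i)ᶜ
  have hρ_pos (i x) : 0 < ρ i x ↔ x ∈ V i := by
    rw [← (hVo i).isClosed_compl.notMem_iff_infDist_pos (nonempty_compl.2 (hVuniv i))]
    exact not_not
  have hρ_supp (i) : support (ρ i) = V i := by
    ext x
    rw [mem_support, ← hρ_pos]
    exact ⟨fun h => lt_of_le_of_ne infDist_nonneg (Ne.symm h), ne_of_gt⟩
  have hρ_fin : LocallyFinite fun i => support (ρ i) := by simpa only [hρ_supp] using hVfin
  have hρ_lip (i) : LocallyLipschitz (ρ i) := (lipschitz_infDist_pt _).locallyLipschitz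
  set den : X → ℝ := fun x => ∑ᶠ i, ρ i x
  have hden_pos (x) : 0 < den x := by
    obtain ⟨i, hi⟩ := mem_iUnion.1 (hVcov.symm ▸ mem_univ x)
    exact finsum_pos (fun _ => infDist_nonneg) ⟨i, (hρ_pos i x).2 hi⟩ (hρ_fin.point_finite x)
  refine ⟨fun x => (den x)⁻¹ • ∑ᶠ i, ρ i x • c i, ?_, fun x => ?_⟩
  · refine ((LocallyLipschitz.finsum hρ_lip hρ_fin).inv₀ fun x => (hden_pos x).ne').smul
      (LocallyLipschitz.finsum (fun i => (hρ_lip i).smul (LocallyLipschitz.const _)) ?_)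
    exact hρ_fin.subset fun i => support_smul_subset_left _ _
  · simp only [smul_finsum, smul_smul]
    refine (ht x).finsum_mem (fun i => mul_nonneg (inv_nonneg.2 (hden_pos x).le) infDist_nonneg)
      ?_ fun i hi => hUt i x (hVU i ((hρ_pos i x).1 ?_))
    · rw [← mul_finsum]
      exact inv_mul_cancel₀ (hden_pos x).ne'
    · exact lt_of_le_of_ne infDist_nonneg (Ne.symm (right_ne_zero_of_mul hi))

end Selection

section PseudoGradient

variable {X : Type*} [NormedAddCommGroup X] [NormedSpace ℝ X]

theorem ContinuousLinearMap.exists_norm_le_one_lt_apply {ℓ : X →L[ℝ] ℝ} {a : ℝ} (h : a < ‖ℓ‖) :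
    ∃ y, ‖y‖ ≤ 1 ∧ a < ℓ y := by
  obtain ⟨y, hy, hay⟩ := ℓ.exists_lt_apply_of_lt_opNorm h
  rcases le_or_gt 0 (ℓ y) with hpos | hneg
  · exact ⟨y, hy.le, by rwa [Real.norm_of_nonneg hpos] at hay⟩
  · exact ⟨-y, by simpa using hy.le, by rwa [map_neg, ← Real.norm_of_nonpos hneg.le]⟩

theorem exists_locallyLipschitz_pseudoGradient {D : X → X →L[ℝ] ℝ} (hD : Continuous D)
    {K U : Set X} (hK : IsClosed K) (hU : IsOpen U) (hKU : K ⊆ U) {a : ℝ} (ha : 0 ≤ a)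
    (hDU : ∀ x ∈ U, a < ‖D x‖) :
    ∃ v : X → X, LocallyLipschitz v ∧ ∀ x, ‖v x‖ ≤ 1 ∧ 0 ≤ D x (v x) ∧
      (x ∈ K → a ≤ D x (v x)) ∧ (x ∉ U → v x = 0) := by
  set t : X → Set X := fun x =>
    {y | ‖y‖ ≤ 1 ∧ 0 ≤ D x y ∧ (x ∈ K → a ≤ D x y) ∧ (x ∉ U → y = 0)}
  have ht (x) : Convex ℝ (t x) := by
    intro y₁ h₁ y₂ h₂ s₁ s₂ hs₁ hs₂ hs
    obtain ⟨hy₁, hDy₁, hKy₁, hUy₁⟩ := h₁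
    obtain ⟨hy₂, hDy₂, hKy₂, hUy₂⟩ := h₂
    simp only [t, Set.mem_ofPred_eq, map_add, map_smul, smul_eq_mul]
    refine ⟨?_, by positivity, fun hx => ?_, fun hx => by simp [hUy₁ hx, hUy₂ hx]⟩
    · calc ‖s₁ • y₁ + s₂ • y₂‖ ≤ s₁ * ‖y₁‖ + s₂ * ‖y₂‖ := by
            simpa only [norm_smul, Real.norm_of_nonneg hs₁, Real.norm_of_nonneg hs₂] using
              norm_add_le (s₁ • y₁) (s₂ • y₂)
        _ ≤ s₁ * 1 + s₂ * 1 := by gcongr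
        _ = 1 := by linarith
    · nlinarith [hKy₁ hx, hKy₂ hx]
  refine exists_locallyLipschitz_forall_mem_convex_of_local_const ht fun x => ?_
  by_cases hx : x ∈ U
  · obtain ⟨y, hy, hay⟩ := (D x).exists_norm_le_one_lt_apply (hDU x hx)
    have hnear : ∀ᶠ x' in 𝓝 x, a < D x' y :=
      (hD.clm_apply continuous_const).continuousAt.eventually (lt_mem_nhds hay)
    refine ⟨y, ?_⟩
    filter_upwards [hnear, hU.mem_nhds hx] with x' hx' hx'U
    exact ⟨hy, ha.trans hx'.le, fun _ => hx'.le, fun h => absurd hx'U h⟩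
  · refine ⟨0, ?_⟩
    filter_upwards [hK.isOpen_compl.mem_nhds fun h => hx (hKU h)] with x' hx'
    simp [t, show x' ∉ K from hx']

end PseudoGradient

theorem UniformContinuousOn.exists_tendsto_nhdsWithin {α β : Type*} [UniformSpace α]
    [UniformSpace β] [CompleteSpace β] {f : α → β} {s : Set α} {a : α}
    (hf : UniformContinuousOn f s) (ha : a ∈ closure s) : ∃ b, Tendsto f (𝓝[s] a) (𝓝 b) :=
  have := mem_closure_iff_nhdsWithin_neBot.1 ha
  cauchy_map_iff_exists_tendsto.1 ((cauchy_nhds.mono nhdsWithin_le_nhds).map_of_le hf inf_le_right)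

section IntegralCurve

variable {X : Type*} [NormedAddCommGroup X] [NormedSpace ℝ X] {f : X → X} {σ σ₁ σ₂ : ℝ → X}
  {T : ℝ}

theorem IsIntegralCurveOn.hasDerivWithinAt_Ici {v : ℝ → X → X} {a b t : ℝ}
    (h : IsIntegralCurveOn σ v (Icc a b)) (ht : t ∈ Ico a b) :
    HasDerivWithinAt σ (v t (σ t)) (Ici t) t :=
  ((h t (Ico_subset_Icc_self ht)).mono (Icc_subset_Icc_left ht.1)).mono_of_mem_nhdsWithin
    (Icc_mem_nhdsGE ht.2)

theorem IsIntegralCurveOn.lipschitzOnWith {C : ℝ≥0} (hb : ∀ x, ‖f x‖ ≤ C) {s : Set ℝ}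
    (h : IsIntegralCurveOn σ (fun _ ↦ f) s) (hs : Convex ℝ s) : LipschitzOnWith C σ s :=
  hs.lipschitzOnWith_of_nnnorm_hasDerivWithin_le h fun _ _ => by
    rw [← NNReal.coe_le_coe, coe_nnnorm]
    exact hb _

theorem IsIntegralCurveOn.glue {v : ℝ → X → X} {β : ℝ → X} {a b c : ℝ}
    (hσ : IsIntegralCurveOn σ v (Icc a b)) (hβ : IsIntegralCurveOn β v (Icc b c))
    (hab : a ≤ b) (hbc : b ≤ c) (hb : σ b = β b) :
    IsIntegralCurveOn (fun t => if t ≤ b then σ t else β t) v (Icc a c) := by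
  set γ := fun t => if t ≤ b then σ t else β t
  have hγσ : EqOn γ σ (Icc a b) := fun t ht => if_pos ht.2
  have hγβ : EqOn γ β (Icc b c) := fun t ht => by
    rcases ht.1.eq_or_lt with rfl | hlt
    · simp [γ, hb]
    · exact if_neg hlt.not_ge
  intro t ht
  rw [← Icc_union_Icc_eq_Icc hab hbc]
  refine HasDerivWithinAt.union ?_ ?_
  · by_cases htb : t ≤ b
    · rw [hγσ ⟨ht.1, htb⟩]
      exact (hσ t ⟨ht.1, htb⟩).congr hγσ (hγσ ⟨ht.1, htb⟩)
    · exact HasFDerivWithinAt.of_notMem_closure (by rw [closure_Icc]; exact fun h => htb h.2)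
  · by_cases hbt : b ≤ t
    · rw [hγβ ⟨hbt, ht.2⟩]
      exact (hβ t ⟨hbt, ht.2⟩).congr hγβ (hγβ ⟨hbt, ht.2⟩)
    · exact HasFDerivWithinAt.of_notMem_closure (by rw [closure_Icc]; exact fun h => hbt h.1)

theorem IsIntegralCurveOn.comp_const_sub (h : IsIntegralCurveOn σ (fun _ ↦ f) (Icc 0 T)) :
    IsIntegralCurveOn (fun t ↦ σ (T - t)) (fun _ ↦ -f) (Icc 0 T) := by
  intro t ht
  have hmaps : MapsTo (T - ·) (Icc 0 T) (Icc 0 T) := fun s hs =>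
    ⟨by linarith [hs.2], by linarith [hs.1]⟩
  have := (h (T - t) (hmaps ht)).scomp t ((hasDerivAt_id t).const_sub T).hasDerivWithinAt hmaps
  simpa [Function.comp_def] using this

/-- Gronwall's inequality, applied in a uniform tube around the compact trajectory of `σ₁` on
which `f` is Lipschitz; the first exit time from the tube cannot occur before time `T`. -/
theorem IsIntegralCurveOn.exists_dist_le_mul_exp (hl : LocallyLipschitz f)
    (h₁ : IsIntegralCurveOn σ₁ (fun _ ↦ f) (Icc 0 T)) :
    ∃ ρ > 0, ∃ L : ℝ≥0, ∀ σ₂ : ℝ → X, IsIntegralCurveOn σ₂ (fun _ ↦ f) (Icc 0 T) →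
      dist (σ₂ 0) (σ₁ 0) < ρ →
      ∀ t ∈ Icc 0 T, dist (σ₂ t) (σ₁ t) ≤ dist (σ₂ 0) (σ₁ 0) * Real.exp (L * t) := by
  obtain ⟨r, hr, L, hL⟩ :=
    hl.exists_forall_lipschitzOnWith_ball (isCompact_Icc.image_of_continuousOn h₁.continuousOn)
  refine ⟨r * Real.exp (-(L * T)), by positivity, L, fun σ₂ h₂ hd => ?_⟩
  set d := dist (σ₂ 0) (σ₁ 0)
  have gronwall (b : ℝ) (hb : b ≤ T) (hin : ∀ t ∈ Ico 0 b, dist (σ₂ t) (σ₁ t) < r) :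
      ∀ t ∈ Icc 0 b, dist (σ₂ t) (σ₁ t) ≤ d * Real.exp (L * t) := by
    have hsub : Icc 0 b ⊆ Icc 0 T := Icc_subset_Icc_right hb
    simpa using dist_le_of_trajectories_ODE_of_mem (v := fun _ ↦ f) (s := fun t ↦ ball (σ₁ t) r)
      (fun t ht => hL _ (mem_image_of_mem _ (hsub (Ico_subset_Icc_self ht))))
      (h₂.continuousOn.mono hsub) (fun t ht => h₂.hasDerivWithinAt_Ici ⟨ht.1, ht.2.trans_le hb⟩)
      (fun t ht => mem_ball.2 (hin t ht)) (h₁.continuousOn.mono hsub)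
      (fun t ht => h₁.hasDerivWithinAt_Ici ⟨ht.1, ht.2.trans_le hb⟩)
      (fun t _ => mem_ball_self hr) le_rfl
  have hbound (t : ℝ) (ht : t ≤ T) : d * Real.exp (L * t) < r := by
    calc d * Real.exp (L * t) ≤ d * Real.exp (L * T) := by gcongr
      _ < r * Real.exp (-(L * T)) * Real.exp (L * T) := by gcongr
      _ = r := by rw [mul_assoc, ← Real.exp_add, neg_add_cancel, Real.exp_zero, mul_one]
  suffices hin : ∀ t ∈ Icc 0 T, dist (σ₂ t) (σ₁ t) < r from
    gronwall T le_rfl fun t ht => hin t (Ico_subset_Icc_self ht)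
  by_contra! hexit
  set B := {t ∈ Icc 0 T | r ≤ dist (σ₂ t) (σ₁ t)}
  have hB : IsClosed B :=
    (continuous_dist.comp_continuousOn (ContinuousOn.prodMk h₂.continuousOn h₁.continuousOn)
      ).preimage_isClosed_of_isClosed isClosed_Icc isClosed_Ici
  have hBbdd : BddBelow B := ⟨0, fun t ht => ht.1.1⟩
  obtain ⟨⟨hτ0, hτT⟩, hτr⟩ := hB.csInf_mem hexit hBbdd
  have hbefore : ∀ t ∈ Ico 0 (sInf B), dist (σ₂ t) (σ₁ t) < r := fun t ht =>
    not_le.1 fun h => (csInf_le hBbdd ⟨⟨ht.1, ht.2.le.trans hτT⟩, h⟩).not_gt ht.2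
  linarith [gronwall _ hτT hbefore _ ⟨hτ0, le_rfl⟩, hbound _ hτT]

theorem IsIntegralCurveOn.eqOn_of_locallyLipschitz (hl : LocallyLipschitz f)
    (h₁ : IsIntegralCurveOn σ₁ (fun _ ↦ f) (Icc 0 T))
    (h₂ : IsIntegralCurveOn σ₂ (fun _ ↦ f) (Icc 0 T)) (h0 : σ₁ 0 = σ₂ 0) :
    EqOn σ₁ σ₂ (Icc 0 T) := by
  obtain ⟨ρ, hρ, L, hL⟩ := h₂.exists_dist_le_mul_exp hl
  intro t ht
  simpa [h0] using hL σ₁ h₁ (by simpa [h0] using hρ) t ht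

end IntegralCurve

section Flow

variable {X : Type*} [NormedAddCommGroup X] [NormedSpace ℝ X] {f : X → X} {σ : ℝ → X} {T : ℝ}
  {C : ℝ≥0}

theorem LocallyLipschitz.exists_forall_closedBall_isIntegralCurveOn [CompleteSpace X]
    (hb : ∀ x, ‖f x‖ ≤ C) (hl : LocallyLipschitz f) (x₀ : X) :
    ∃ ρ > 0, ∃ R > 0, ∀ y ∈ closedBall x₀ ρ, ∀ t₀ : ℝ, ∃ β : ℝ → X, β t₀ = y ∧
      IsIntegralCurveOn β (fun _ ↦ f) (Icc (t₀ - R) (t₀ + R)) := by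
  obtain ⟨K, s, hs, hK⟩ := hl x₀
  obtain ⟨a, ha, has⟩ := Metric.mem_nhds_iff.mp hs
  lift a to ℝ≥0 using ha.le
  refine ⟨(a / 4 : ℝ≥0), by simpa using ha, a / (4 * (C + 1)), by positivity, fun y hy t₀ => ?_⟩
  have hR : 0 ≤ (a : ℝ) / (4 * (C + 1)) := by positivity
  refine (IsPicardLindelof.of_time_independent (t₀ := ⟨t₀, by constructor <;> linarith⟩)
    (a := a / 2) (L := C) (fun x _ => hb x)
    (hK.mono ((closedBall_subset_ball (by simpa using half_lt_self ha)).trans has))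
    ?_).exists_eq_forall_mem_Icc_hasDerivWithinAt hy
  simp only [NNReal.coe_div, NNReal.coe_ofNat, add_sub_cancel_left, sub_sub_cancel, max_self]
  rw [mul_div_assoc', div_le_iff₀ (by positivity)]
  nlinarith [C.coe_nonneg, a.coe_nonneg]

theorem LocallyLipschitz.exists_extend_isIntegralCurveOn [CompleteSpace X]
    (hb : ∀ x, ‖f x‖ ≤ C) (hl : LocallyLipschitz f) (x₀ : X) :
    ∃ ρ > 0, ∃ R > 0, ∀ t ≥ 0, ∀ σ : ℝ → X, IsIntegralCurveOn σ (fun _ ↦ f) (Icc 0 t) →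
      σ t ∈ closedBall x₀ ρ → ∃ σ' : ℝ → X, σ' 0 = σ 0 ∧
        IsIntegralCurveOn σ' (fun _ ↦ f) (Icc 0 (t + R)) := by
  obtain ⟨ρ, hρ, R, hR, hloc⟩ := hl.exists_forall_closedBall_isIntegralCurveOn hb x₀
  refine ⟨ρ, hρ, R, hR, fun t ht σ hσ hσt => ?_⟩
  obtain ⟨β, hβt, hβ⟩ := hloc (σ t) hσt t
  exact ⟨_, if_pos ht, hσ.glue (hβ.mono (Icc_subset_Icc_left (by linarith))) ht
    (by linarith) hβt.symm⟩

/-- Solutions can be continued as long as they exist: otherwise, by completeness, they would have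
a limit at the supremum `τ` of their existence times, and could be extended past `τ`. -/
theorem exists_isIntegralCurveOn_Icc [CompleteSpace X] (hb : ∀ x, ‖f x‖ ≤ C)
    (hl : LocallyLipschitz f) (u : X) (T : ℝ) :
    ∃ σ : ℝ → X, σ 0 = u ∧ IsIntegralCurveOn σ (fun _ ↦ f) (Icc 0 T) := by
  set J := {t : ℝ | 0 ≤ t ∧ ∃ σ : ℝ → X, σ 0 = u ∧ IsIntegralCurveOn σ (fun _ ↦ f) (Icc 0 t)}
  suffices ¬BddAbove J by
    obtain ⟨t, ⟨-, σ, hσ0, hσ⟩, hTt⟩ := not_bddAbove_iff.mp this T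
    exact ⟨σ, hσ0, hσ.mono (Icc_subset_Icc_right hTt.le)⟩
  intro hJ
  have h0J : (0 : ℝ) ∈ J := by
    obtain ⟨_, hρ, R, hR, hloc⟩ := hl.exists_forall_closedBall_isIntegralCurveOn hb u
    obtain ⟨β, hβ0, hβ⟩ := hloc u (mem_closedBall_self hρ.le) 0
    exact ⟨le_rfl, β, hβ0, hβ.mono (Icc_subset_Icc (by linarith) (by linarith))⟩
  choose! σ hσ0 hσ using fun t (ht : t ∈ J) => ht.2
  have hlip : LipschitzOnWith C (fun t => σ t t) J := by
    refine LipschitzOnWith.of_dist_le_mul fun s hs t ht => ?_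
    wlog hst : s ≤ t generalizing s t
    · rw [dist_comm, dist_comm s]
      exact this t ht s hs (le_of_not_ge hst)
    have hσst : σ s s = σ t s := (hσ s hs).eqOn_of_locallyLipschitz hl
      ((hσ t ht).mono (Icc_subset_Icc_right hst)) ((hσ0 s hs).trans (hσ0 t ht).symm)
      ⟨hs.1, le_rfl⟩
    simp only [hσst]
    exact ((hσ t ht).lipschitzOnWith hb (convex_Icc 0 t)).dist_le_mul s ⟨hs.1, hst⟩ t
      ⟨ht.1, le_rfl⟩
  have hτ := csSup_mem_closure ⟨0, h0J⟩ hJ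
  obtain ⟨x, hx⟩ := hlip.uniformContinuousOn.exists_tendsto_nhdsWithin hτ
  obtain ⟨ρ, hρ, R, hR, hext⟩ := hl.exists_extend_isIntegralCurveOn hb x
  have := mem_closure_iff_nhdsWithin_neBot.1 hτ
  obtain ⟨t, htJ, htx, htR⟩ := (eventually_mem_nhdsWithin.and
    ((hx.eventually_mem (closedBall_mem_nhds x hρ)).and
      (nhdsWithin_le_nhds (Ioi_mem_nhds (sub_lt_self (sSup J) hR))))).exists
  obtain ⟨σ', hσ'0, hσ'⟩ := hext t htJ.1 (σ t) (hσ t htJ) htx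
  have := le_csSup hJ ⟨by linarith [htJ.1], σ', hσ'0.trans (hσ0 t htJ), hσ'⟩
  linarith

/-- Junk unless `0 ≤ T` and `f` is locally Lipschitz, in which case `flowMap_eq` identifies it with
the time-`T` map of the flow of `f`. -/
noncomputable def flowMap (f : X → X) (T : ℝ) (u : X) : X :=
  (Classical.epsilon fun σ : ℝ → X ↦ σ 0 = u ∧ IsIntegralCurveOn σ (fun _ ↦ f) (Icc 0 T)) T

theorem flowMap_eq (hl : LocallyLipschitz f) (hT : 0 ≤ T) {u : X} (hσ0 : σ 0 = u)
    (hσ : IsIntegralCurveOn σ (fun _ ↦ f) (Icc 0 T)) : flowMap f T u = σ T := by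
  have h := Classical.epsilon_spec (p := fun σ : ℝ → X ↦
    σ 0 = u ∧ IsIntegralCurveOn σ (fun _ ↦ f) (Icc 0 T)) ⟨σ, hσ0, hσ⟩
  exact h.2.eqOn_of_locallyLipschitz hl hσ (h.1.trans hσ0.symm) ⟨hT, le_rfl⟩

theorem flowMap_eq_self (hl : LocallyLipschitz f) (hT : 0 ≤ T) {u : X} (hu : f u = 0) :
    flowMap f T u = u :=
  flowMap_eq hl hT rfl ((isIntegralCurve_const fun _ => hu).isIntegralCurveOn _)

variable [CompleteSpace X]

theorem continuous_flowMap (hb : ∀ x, ‖f x‖ ≤ C) (hl : LocallyLipschitz f) (hT : 0 ≤ T) :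
    Continuous (flowMap f T) := by
  rw [Metric.continuous_iff]
  intro u ε hε
  obtain ⟨σ₁, hσ₁0, hσ₁⟩ := exists_isIntegralCurveOn_Icc hb hl u T
  obtain ⟨ρ, hρ, L, hL⟩ := hσ₁.exists_dist_le_mul_exp hl
  refine ⟨min ρ (ε * Real.exp (-(L * T))), by positivity, fun u' hu' => ?_⟩
  obtain ⟨σ₂, hσ₂0, hσ₂⟩ := exists_isIntegralCurveOn_Icc hb hl u' T
  rw [flowMap_eq hl hT hσ₁0 hσ₁, flowMap_eq hl hT hσ₂0 hσ₂]
  rw [← hσ₁0, ← hσ₂0, lt_min_iff] at hu'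
  calc dist (σ₂ T) (σ₁ T) ≤ dist (σ₂ 0) (σ₁ 0) * Real.exp (L * T) :=
        hL σ₂ hσ₂ hu'.1 T ⟨hT, le_rfl⟩
    _ < ε * Real.exp (-(L * T)) * Real.exp (L * T) := by gcongr; exact hu'.2
    _ = ε := by rw [mul_assoc, ← Real.exp_add, neg_add_cancel, Real.exp_zero, mul_one]

theorem flowMap_neg_flowMap (hb : ∀ x, ‖f x‖ ≤ C) (hl : LocallyLipschitz f) (hT : 0 ≤ T)
    (u : X) : flowMap (-f) T (flowMap f T u) = u := by
  obtain ⟨σ, hσ0, hσ⟩ := exists_isIntegralCurveOn_Icc hb hl u T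
  rw [flowMap_eq hl hT hσ0 hσ, flowMap_eq hl.neg hT (by simp) hσ.comp_const_sub, sub_self, hσ0]

theorem exists_homeomorph_coe_eq_flowMap (hb : ∀ x, ‖f x‖ ≤ C) (hl : LocallyLipschitz f)
    (hT : 0 ≤ T) : ∃ η : X ≃ₜ X, ⇑η = flowMap f T := by
  have hb' : ∀ x, ‖(-f) x‖ ≤ C := by simpa using hb
  refine ⟨⟨⟨flowMap f T, flowMap (-f) T, flowMap_neg_flowMap hb hl hT, fun u => ?_⟩,
    continuous_flowMap hb hl hT, continuous_flowMap hb' hl.neg hT⟩, rfl⟩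
  simpa using flowMap_neg_flowMap hb' hl.neg hT u

theorem norm_flowMap_sub_le (hb : ∀ x, ‖f x‖ ≤ C) (hl : LocallyLipschitz f) (hT : 0 ≤ T)
    (u : X) : ‖flowMap f T u - u‖ ≤ C * T := by
  obtain ⟨σ, hσ0, hσ⟩ := exists_isIntegralCurveOn_Icc hb hl u T
  rw [flowMap_eq hl hT hσ0 hσ, ← hσ0, ← dist_eq_norm]
  simpa [abs_of_nonneg hT] using
    (hσ.lipschitzOnWith hb (convex_Icc 0 T)).dist_le_mul T ⟨hT, le_rfl⟩ 0 ⟨le_rfl, hT⟩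

end Flow

section Descent

variable {X : Type*} [NormedAddCommGroup X] [NormedSpace ℝ X] {f : X → X} {σ : ℝ → X}
  {φ : X → ℝ}

theorem IsIntegralCurveOn.apply_le_sub_mul (hφ : Differentiable ℝ φ) {a b : ℝ}
    (hσ : IsIntegralCurveOn σ (fun _ ↦ f) (Icc a b)) (hab : a ≤ b) {K : ℝ}
    (hK : ∀ t ∈ Ico a b, fderiv ℝ φ (σ t) (f (σ t)) ≤ -K) :
    φ (σ b) ≤ φ (σ a) - K * (b - a) :=
  image_le_of_deriv_right_le_deriv_boundary (f := φ ∘ σ) (B := fun t => φ (σ a) - K * (t - a))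
    (hφ.continuous.comp_continuousOn hσ.continuousOn)
    (fun t ht => (hφ (σ t)).hasFDerivAt.comp_hasDerivWithinAt t (hσ.hasDerivWithinAt_Ici ht))
    (by simp) (by fun_prop)
    (fun t _ => by simpa using ((((hasDerivAt_id t).sub_const a).const_mul K).const_sub
      (φ (σ a))).hasDerivWithinAt) hK ⟨hab, le_rfl⟩

variable [CompleteSpace X] {C : ℝ≥0} {T : ℝ}

theorem apply_flowMap_le (hb : ∀ x, ‖f x‖ ≤ C) (hl : LocallyLipschitz f) (hT : 0 ≤ T)
    (hφ : Differentiable ℝ φ) (hf : ∀ x, fderiv ℝ φ x (f x) ≤ 0) (u : X) :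
    φ (flowMap f T u) ≤ φ u := by
  obtain ⟨σ, hσ0, hσ⟩ := exists_isIntegralCurveOn_Icc hb hl u T
  rw [flowMap_eq hl hT hσ0 hσ, ← hσ0]
  simpa using hσ.apply_le_sub_mul hφ hT (K := 0) fun t _ => by simpa using hf (σ t)

/-- The trajectory stays in `closedBall u (C * T)`; as long as `φ` has not dropped to `b` along it,
`φ` decreases at rate `K`. -/
theorem apply_flowMap_le_max (hb : ∀ x, ‖f x‖ ≤ C) (hl : LocallyLipschitz f) (hT : 0 ≤ T)
    (hφ : Differentiable ℝ φ) (hf : ∀ x, fderiv ℝ φ x (f x) ≤ 0) {u : X} {b K : ℝ}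
    (hK : ∀ x ∈ closedBall u (C * T), b ≤ φ x → φ x ≤ φ u → fderiv ℝ φ x (f x) ≤ -K) :
    φ (flowMap f T u) ≤ max b (φ u - K * T) := by
  obtain ⟨σ, hσ0, hσ⟩ := exists_isIntegralCurveOn_Icc hb hl u T
  rw [flowMap_eq hl hT hσ0 hσ]
  rcases le_or_gt (φ (σ T)) b with hσb | hσb
  · exact le_max_of_le_left hσb
  have hdecr (s t : ℝ) (hs : 0 ≤ s) (hst : s ≤ t) (ht : t ≤ T) : φ (σ t) ≤ φ (σ s) := by
    simpa using (hσ.mono (Icc_subset_Icc hs ht)).apply_le_sub_mul hφ hst (K := 0)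
      fun r _ => by simpa using hf (σ r)
  refine le_max_of_le_right ?_
  have hdist (t : ℝ) (ht : t ∈ Ico 0 T) : σ t ∈ closedBall u (C * T) := by
    rw [mem_closedBall, ← hσ0]
    calc dist (σ t) (σ 0) ≤ C * dist t 0 := (hσ.lipschitzOnWith hb (convex_Icc 0 T)).dist_le_mul
          t ⟨ht.1, ht.2.le⟩ 0 ⟨le_rfl, hT⟩
      _ ≤ C * T := by
          rw [Real.dist_eq, sub_zero, abs_of_nonneg ht.1]
          gcongr
          exact ht.2.le
  simpa [hσ0] using hσ.apply_le_sub_mul hφ hT fun t ht => hK (σ t) (hdist t ht)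
    (hσb.le.trans (hdecr t T ht.1 ht.2.le le_rfl)) (hσ0 ▸ hdecr 0 t le_rfl ht.1 ht.2.le)

end Descent

theorem exists_pseudoGradient_of_le_norm_fderiv {X : Type*} [NormedAddCommGroup X]
    [NormedSpace ℝ X] {φ : X → ℝ} (hφ : ContDiff ℝ 1 φ) {S : Set X} {c ε δ : ℝ} (hε : 0 < ε)
    (hδ : 0 < δ) (h : ∀ u : X, φ u ∈ Icc (c - 2 * ε) (c + 2 * ε) →
      (closedBall u (2 * δ) ∩ S).Nonempty → 8 * ε / δ ≤ ‖fderiv ℝ φ u‖) :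
    ∃ v : X → X, LocallyLipschitz v ∧ ∀ u, ‖v u‖ ≤ 1 ∧ 0 ≤ fderiv ℝ φ u (v u) ∧
      (φ u ∈ Icc (c - ε) (c + ε) → u ∈ cthickening δ S → 4 * ε / δ ≤ fderiv ℝ φ u (v u)) ∧
      ((φ u ∉ Icc (c - 2 * ε) (c + 2 * ε) ∨ closedBall u (2 * δ) ∩ S = ∅) → v u = 0) := by
  have hnear (u : X) (hu : u ∈ thickening (2 * δ) S) : (closedBall u (2 * δ) ∩ S).Nonempty := by
    obtain ⟨s, hs, hus⟩ := mem_thickening_iff.1 hu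
    exact ⟨s, mem_closedBall'.2 hus.le, hs⟩
  obtain ⟨v, hvL, hv⟩ := exists_locallyLipschitz_pseudoGradient (a := 4 * ε / δ)
    (K := φ ⁻¹' Icc (c - ε) (c + ε) ∩ cthickening δ S)
    (U := φ ⁻¹' Ioo (c - 2 * ε) (c + 2 * ε) ∩ thickening (2 * δ) S)
    (hφ.continuous_fderiv one_ne_zero) ((isClosed_Icc.preimage hφ.continuous).inter
      isClosed_cthickening) ((isOpen_Ioo.preimage hφ.continuous).inter isOpen_thickening)
    (inter_subset_inter (preimage_mono (Icc_subset_Ioo (by linarith) (by linarith)))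
      (cthickening_subset_thickening' (by positivity) (by linarith) S)) (by positivity)
    fun u hu => (h u (Ioo_subset_Icc_self hu.1) (hnear u hu.2)).trans_lt' (by gcongr; norm_num)
  refine ⟨v, hvL, fun u => ⟨(hv u).1, (hv u).2.1, fun hu₁ hu₂ => (hv u).2.2.1 ⟨hu₁, hu₂⟩,
    fun hu => (hv u).2.2.2 fun ⟨hu₁, hu₂⟩ => ?_⟩⟩
  rcases hu with hu | hu
  exacts [hu (Ioo_subset_Icc_self hu₁), (hnear u hu₂).ne_empty hu]

/-- Willem's quantitative deformation lemma. -/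
theorem willem_quantitative_deformation
    {X : Type*} [NormedAddCommGroup X] [NormedSpace ℝ X] [CompleteSpace X]
    (φ : X → ℝ) (hφ : ContDiff ℝ 1 φ) (S : Set X) (c ε δ : ℝ)
    (hε : 0 < ε) (hδ : 0 < δ)
    (h : ∀ u : X, φ u ∈ Set.Icc (c - 2*ε) (c + 2*ε) →
      (Metric.closedBall u (2*δ) ∩ S).Nonempty → 8*ε/δ ≤ ‖fderiv ℝ φ u‖) :
    ∃ η : X ≃ₜ X,
      (∀ u, φ (η u) ≤ φ u) ∧
      (∀ u, (φ u ∉ Set.Icc (c - 2*ε) (c + 2*ε) ∨ Metric.closedBall u (2*δ) ∩ S = ∅) →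
        η u = u) ∧
      (∀ u ∈ S, φ u ≤ c + ε → φ (η u) ≤ c - ε) ∧
      (∀ u, ‖η u - u‖ ≤ δ) := by
  obtain ⟨v, hvL, hv⟩ := exists_pseudoGradient_of_le_norm_fderiv hφ hε hδ h
  have hb : ∀ x, ‖(-v) x‖ ≤ (1 : ℝ≥0) := by simpa using fun x => (hv x).1
  have hdesc : ∀ x, fderiv ℝ φ x ((-v) x) ≤ 0 := by simpa using fun x => (hv x).2.1
  have hT : 0 ≤ δ / 2 := by positivity
  have hTδ : ((1 : ℝ≥0) : ℝ) * (δ / 2) ≤ δ := by rw [NNReal.coe_one, one_mul]; linarith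
  obtain ⟨η, hη⟩ := exists_homeomorph_coe_eq_flowMap hb hvL.neg hT
  refine ⟨η, fun u => ?_, fun u hu => ?_, fun u hu hφu => ?_, fun u => ?_⟩ <;> rw [hη]
  · exact apply_flowMap_le hb hvL.neg hT (hφ.differentiable one_ne_zero) hdesc u
  · exact flowMap_eq_self hvL.neg hT (neg_eq_zero.2 ((hv u).2.2.2 hu))
  · refine (apply_flowMap_le_max hb hvL.neg hT (hφ.differentiable one_ne_zero) hdesc
      (b := c - ε) (K := 4 * ε / δ) fun x hx hbx hxu => ?_).trans (max_le le_rfl ?_)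
    · have hxS : x ∈ cthickening δ S :=
        mem_cthickening_of_dist_le x u δ S hu ((mem_closedBall.1 hx).trans hTδ)
      simpa using (hv x).2.2.1 ⟨hbx, hxu.trans hφu⟩ hxS
    · rw [show 4 * ε / δ * (δ / 2) = 2 * ε by field_simp; ring]
      linarith
  · exact (norm_flowMap_sub_le hb hvL.neg hT u).trans hTδ
end

section
/- Let H ⊆ ℝᴺ be a closed half-space with reflection σ_H. The polarization map u ↦ u^H is a contraction on L^p(ℝᴺ) for 1 ≤ p < ∞: for all u, v ∈ L^p(ℝᴺ), ‖u^H − v^H‖_{L^p} ≤ ‖u − v‖_{L^p}. -/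
/-!
The reflection `σ` pairs each point `x` of the half-space with its mirror image, and on such a
pair `(u^H x, u^H (σ x))` is `(max, min)` of `(u x, u (σ x))`. For a convex `φ`, the differences
`max a b - max c d` and `min a b - min c d` lie between `a - c` and `b - d` and have the same sum,
so `φ` of the former pair is at most `φ` of the latter; with `φ = |·|^p` this bounds the sum of
the integrand at `x` and `σ x`. Since `σ` preserves Lebesgue measure, integrating this bound
gives twice the inequality between the `p`-th powers of the two norms.
-/

open MeasureTheory Classical ENNReal

/-- The reflection across the boundary hyperplane `{x | ⟪x, a⟫ = t}` of the
closed half-space `{x | ⟪x, a⟫ ≤ t}`, where `a` is a unit vector. -/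
noncomputable def reflect {N : ℕ} (a : EuclideanSpace ℝ (Fin N)) (t : ℝ)
    (x : EuclideanSpace ℝ (Fin N)) : EuclideanSpace ℝ (Fin N) :=
  x - (2 * ((inner ℝ x a : ℝ) - t)) • a

/-- The closed half-space `{x | ⟪x, a⟫ ≤ t}`. -/
def halfSpace {N : ℕ} (a : EuclideanSpace ℝ (Fin N)) (t : ℝ) :
    Set (EuclideanSpace ℝ (Fin N)) :=
  {x | (inner ℝ x a : ℝ) ≤ t}

/-- The polarization of `u` with respect to the half-space `halfSpace a t`. -/
noncomputable def polarize {N : ℕ} (a : EuclideanSpace ℝ (Fin N)) (t : ℝ)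
    (u : EuclideanSpace ℝ (Fin N) → ℝ) (x : EuclideanSpace ℝ (Fin N)) : ℝ :=
  if x ∈ halfSpace a t then max (u x) (u (reflect a t x))
  else min (u x) (u (reflect a t x))

theorem ConvexOn.map_add_map_le_of_add_eq {φ : ℝ → ℝ} (hφ : ConvexOn ℝ Set.univ φ)
    {m M x y : ℝ} (hmx : m ≤ x) (hxM : x ≤ M) (hsum : x + y = m + M) :
    φ x + φ y ≤ φ m + φ M := by
  rcases hmx.eq_or_lt with rfl | hmx'
  · obtain rfl : y = M := by linarith
    exact le_rfl
  set l := (M - x) / (M - m)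
  have hl : l * (M - m) = M - x := div_mul_cancel₀ _ (by linarith)
  have hl0 : 0 ≤ l := div_nonneg (by linarith) (by linarith)
  have hl1 : 0 ≤ 1 - l := by rw [sub_nonneg]; exact div_le_one_of_le₀ (by linarith) (by linarith)
  have hx : l • m + (1 - l) • M = x := by simp only [smul_eq_mul]; linear_combination -hl
  have hy : (1 - l) • m + l • M = y := by simp only [smul_eq_mul]; linear_combination hl - hsum
  have hφx := hφ.2 (Set.mem_univ m) (Set.mem_univ M) hl0 hl1 (add_sub_cancel l 1)
  have hφy := hφ.2 (Set.mem_univ m) (Set.mem_univ M) hl1 hl0 (sub_add_cancel 1 l)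
  rw [hx] at hφx
  rw [hy] at hφy
  simp only [smul_eq_mul] at hφx hφy
  linarith

theorem ConvexOn.map_max_sub_max_add_map_min_sub_min_le {φ : ℝ → ℝ}
    (hφ : ConvexOn ℝ Set.univ φ) (a b c d : ℝ) :
    φ (max a b - max c d) + φ (min a b - min c d) ≤ φ (a - c) + φ (b - d) := by
  rcases le_total a b with hab | hab <;> rcases le_total c d with hcd | hcd <;>
    simp only [max_eq_left, max_eq_right, min_eq_left, min_eq_right, hab, hcd]
  · exact (add_comm _ _).le
  · exact hφ.map_add_map_le_of_add_eq (by linarith) (by linarith) (by ring)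
  · rw [add_comm (φ (a - c))]
    exact hφ.map_add_map_le_of_add_eq (by linarith) (by linarith) (by ring)
  · exact le_rfl

theorem convexOn_abs_rpow {q : ℝ} (hq : 1 ≤ q) : ConvexOn ℝ Set.univ fun x : ℝ => |x| ^ q := by
  refine ⟨convex_univ, fun x _ y _ α β hα hβ hαβ => ?_⟩
  calc |α • x + β • y| ^ q ≤ (α • |x| + β • |y|) ^ q := by
        gcongr
        simpa [abs_of_nonneg hα, abs_of_nonneg hβ] using abs_add_le (α * x) (β * y)
    _ ≤ α • |x| ^ q + β • |y| ^ q :=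
        (convexOn_rpow hq).2 (abs_nonneg x) (abs_nonneg y) hα hβ hαβ

theorem enorm_max_sub_max_rpow_add_enorm_min_sub_min_rpow_le {q : ℝ} (hq : 1 ≤ q)
    (a b c d : ℝ) :
    ‖max a b - max c d‖ₑ ^ q + ‖min a b - min c d‖ₑ ^ q ≤ ‖a - c‖ₑ ^ q + ‖b - d‖ₑ ^ q := by
  have hofReal (r : ℝ) : ‖r‖ₑ ^ q = ENNReal.ofReal (|r| ^ q) := by
    rw [Real.enorm_eq_ofReal_abs, ENNReal.ofReal_rpow_of_nonneg (abs_nonneg r) (by linarith)]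
  simp only [hofReal]
  rw [← ENNReal.ofReal_add (by positivity) (by positivity),
    ← ENNReal.ofReal_add (by positivity) (by positivity)]
  exact ENNReal.ofReal_le_ofReal ((convexOn_abs_rpow hq).map_max_sub_max_add_map_min_sub_min_le ..)

theorem MeasureTheory.lintegral_le_lintegral_of_add_comp_le {α : Type*} [MeasurableSpace α]
    {μ : Measure α} {σ : α → α} (hσ : MeasurePreserving σ μ μ) (hσe : MeasurableEmbedding σ)
    {f g : α → ℝ≥0∞} (hg : AEMeasurable g μ) (hfg : ∀ x, f x + f (σ x) ≤ g x + g (σ x)) :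
    ∫⁻ x, f x ∂μ ≤ ∫⁻ x, g x ∂μ := by
  have h2 : 2 * ∫⁻ x, f x ∂μ ≤ 2 * ∫⁻ x, g x ∂μ :=
    calc 2 * ∫⁻ x, f x ∂μ = ∫⁻ x, f x ∂μ + ∫⁻ x, f (σ x) ∂μ := by
          rw [hσ.lintegral_comp_emb hσe, two_mul]
      _ ≤ ∫⁻ x, f x + f (σ x) ∂μ := le_lintegral_add _ _
      _ ≤ ∫⁻ x, g x + g (σ x) ∂μ := lintegral_mono hfg
      _ = 2 * ∫⁻ x, g x ∂μ := by
          rw [lintegral_add_left' hg, hσ.lintegral_comp_emb hσe, two_mul]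
  exact (ENNReal.mul_le_mul_iff_right two_ne_zero ofNat_ne_top).1 h2

section Reflection

variable {N : ℕ} {a : EuclideanSpace ℝ (Fin N)} {t : ℝ}

theorem inner_reflect (ha : ‖a‖ = 1) (x : EuclideanSpace ℝ (Fin N)) :
    inner ℝ (reflect a t x) a = 2 * t - inner ℝ x a := by
  simp only [reflect, inner_sub_left, real_inner_smul_left, real_inner_self_eq_norm_sq, ha]
  ring

theorem reflect_reflect (ha : ‖a‖ = 1) (x : EuclideanSpace ℝ (Fin N)) :
    reflect a t (reflect a t x) = x := by
  rw [reflect, inner_reflect ha, reflect]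
  module

theorem reflect_eq_reflection_add (ha : ‖a‖ = 1) (x : EuclideanSpace ℝ (Fin N)) :
    reflect a t x = (ℝ ∙ a)ᗮ.reflection x + (2 * t) • a := by
  rw [Submodule.reflection_orthogonal_apply, Submodule.reflection_singleton_apply, ha, reflect,
    real_inner_comm]
  module

theorem measurePreserving_reflect (ha : ‖a‖ = 1) :
    MeasurePreserving (reflect a t) := by
  simp only [funext (reflect_eq_reflection_add ha)]
  exact (measurePreserving_add_right _ _).comp (LinearIsometryEquiv.measurePreserving _)

theorem measurableEmbedding_reflect (ha : ‖a‖ = 1) :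
    MeasurableEmbedding (reflect a t) := by
  simp only [funext (reflect_eq_reflection_add ha)]
  exact ((ℝ ∙ a)ᗮ.reflection.toHomeomorph.trans (Homeomorph.addRight _)).measurableEmbedding

theorem mem_halfSpace_or_reflect_mem (ha : ‖a‖ = 1) (x : EuclideanSpace ℝ (Fin N)) :
    x ∈ halfSpace a t ∨ reflect a t x ∈ halfSpace a t := by
  simp only [halfSpace, Set.mem_ofPred_eq, inner_reflect ha]
  by_contra! h
  linarith

theorem reflect_eq_self_of_mem_halfSpace (ha : ‖a‖ = 1) {x : EuclideanSpace ℝ (Fin N)}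
    (hx : x ∈ halfSpace a t) (hσx : reflect a t x ∈ halfSpace a t) : reflect a t x = x := by
  simp only [halfSpace, Set.mem_ofPred_eq, inner_reflect ha] at hx hσx
  rw [reflect, show inner ℝ x a = t by linarith]
  simp

end Reflection

section Polarization

variable {N : ℕ} {a : EuclideanSpace ℝ (Fin N)} {t q : ℝ}

theorem polarize_add_polarize_reflect_le_of_mem_of_notMem (ha : ‖a‖ = 1) (hq : 1 ≤ q)
    (u v : EuclideanSpace ℝ (Fin N) → ℝ) {x : EuclideanSpace ℝ (Fin N)}
    (hx : x ∈ halfSpace a t) (hσx : reflect a t x ∉ halfSpace a t) :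
    ‖polarize a t u x - polarize a t v x‖ₑ ^ q
        + ‖polarize a t u (reflect a t x) - polarize a t v (reflect a t x)‖ₑ ^ q
      ≤ ‖u x - v x‖ₑ ^ q + ‖u (reflect a t x) - v (reflect a t x)‖ₑ ^ q := by
  simp only [polarize, if_pos hx, if_neg hσx, reflect_reflect ha, min_comm (u (reflect a t x)),
    min_comm (v (reflect a t x))]
  exact enorm_max_sub_max_rpow_add_enorm_min_sub_min_rpow_le hq ..

theorem polarize_add_polarize_reflect_le (ha : ‖a‖ = 1) (hq : 1 ≤ q)
    (u v : EuclideanSpace ℝ (Fin N) → ℝ) (x : EuclideanSpace ℝ (Fin N)) :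
    ‖polarize a t u x - polarize a t v x‖ₑ ^ q
        + ‖polarize a t u (reflect a t x) - polarize a t v (reflect a t x)‖ₑ ^ q
      ≤ ‖u x - v x‖ₑ ^ q + ‖u (reflect a t x) - v (reflect a t x)‖ₑ ^ q := by
  by_cases hx : x ∈ halfSpace a t <;> by_cases hσx : reflect a t x ∈ halfSpace a t
  · simp [polarize, hx, reflect_eq_self_of_mem_halfSpace ha hx hσx]
  · exact polarize_add_polarize_reflect_le_of_mem_of_notMem ha hq u v hx hσx
  · have hmirror := polarize_add_polarize_reflect_le_of_mem_of_notMem ha hq u v hσx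
      (by rwa [reflect_reflect ha])
    rw [reflect_reflect ha] at hmirror
    rwa [add_comm, add_comm (‖u x - v x‖ₑ ^ q)]
  · exact ((mem_halfSpace_or_reflect_mem ha x).elim hx hσx).elim

end Polarization

/-- Polarization is a contraction on `L^p`. -/
theorem polarization_contraction {N : ℕ} (a : EuclideanSpace ℝ (Fin N)) (t : ℝ)
    (ha : ‖a‖ = 1) (p : ℝ≥0∞) (hp : 1 ≤ p) (hp' : p ≠ ⊤)
    (u v : EuclideanSpace ℝ (Fin N) → ℝ)
    (hu : MemLp u p volume) (hv : MemLp v p volume) :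
    eLpNorm (fun x => polarize a t u x - polarize a t v x) p volume
      ≤ eLpNorm (fun x => u x - v x) p volume := by
  have hq : 1 ≤ p.toReal := by simpa using ENNReal.toReal_mono hp' hp
  rw [eLpNorm_eq_lintegral_rpow_enorm_toReal (one_pos.trans_le hp).ne' hp',
    eLpNorm_eq_lintegral_rpow_enorm_toReal (one_pos.trans_le hp).ne' hp']
  gcongr ?_ ^ _
  exact lintegral_le_lintegral_of_add_comp_le (measurePreserving_reflect ha)
    (measurableEmbedding_reflect ha) ((hu.1.sub hv.1).aemeasurable.enorm.pow_const _)
    (polarize_add_polarize_reflect_le ha hq u v)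
end

section
/- For real numbers a, b, c, d and p ≥ 1: |max{a,b} − max{c,d}|^p + |min{a,b} − min{c,d}|^p ≤ |a − c|^p + |b − d|^p. -/
open Set

/-- Convexity of `t ↦ |t| ^ p` on `ℝ` for `1 ≤ p`. -/
lemma convexOn_abs_rpow_s8 {p : ℝ} (hp : 1 ≤ p) :
    ConvexOn ℝ (univ : Set ℝ) (fun t : ℝ => |t| ^ p) := by
  refine ⟨convex_univ, fun x _ y _ l m hl hm hlm => ?_⟩
  have h1 : |l • x + m • y| ≤ l * |x| + m * |y| := by
    calc |l • x + m • y| ≤ |l • x| + |m • y| := abs_add_le _ _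
    _ = l * |x| + m * |y| := by
        rw [smul_eq_mul, smul_eq_mul, abs_mul, abs_mul, abs_of_nonneg hl, abs_of_nonneg hm]
  calc |l • x + m • y| ^ p ≤ (l * |x| + m * |y|) ^ p := by
        exact Real.rpow_le_rpow (abs_nonneg _) h1 (le_trans zero_le_one hp)
    _ = (l • |x| + m • |y|) ^ p := by simp [smul_eq_mul]
    _ ≤ l • |x| ^ p + m • |y| ^ p :=
        (convexOn_rpow hp).2 (abs_nonneg x) (abs_nonneg y) hl hm hlm
    _ = l * |x| ^ p + m * |y| ^ p := by simp [smul_eq_mul]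

/-- Key lemma: moving a pair closer together (within the gap) decreases `∑ |·|^p`. -/
lemma key_rpow {p : ℝ} (hp : 1 ≤ p) (u v e : ℝ) (he : 0 ≤ e) (hev : e ≤ u - v) :
    |u - e| ^ p + |v + e| ^ p ≤ |u| ^ p + |v| ^ p := by
  rcases eq_or_lt_of_le he with rfl | he'
  · simp
  have huv : v < u := by linarith
  set t : ℝ := e / (u - v) with ht
  have htpos : 0 < t := div_pos he' (by linarith)
  have ht1 : t ≤ 1 := (div_le_one (by linarith)).2 hev
  have h1t : 0 ≤ 1 - t := by linarith
  have hmul : t * (u - v) = e := by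
    rw [ht, div_mul_cancel₀]; linarith
  have hx : u - e = (1 - t) * u + t * v := by nlinarith [hmul]
  have hy : v + e = t * u + (1 - t) * v := by nlinarith [hmul]
  have C := convexOn_abs_rpow_s8 hp
  have h₁ : |u - e| ^ p ≤ (1 - t) * |u| ^ p + t * |v| ^ p := by
    have := C.2 (mem_univ u) (mem_univ v) h1t htpos.le (by ring)
    simpa [smul_eq_mul, ← hx] using this
  have h₂ : |v + e| ^ p ≤ t * |u| ^ p + (1 - t) * |v| ^ p := by
    have := C.2 (mem_univ u) (mem_univ v) htpos.le h1t (by ring)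
    simpa [smul_eq_mul, ← hy] using this
  nlinarith [h₁, h₂]

/-- The elementary pointwise inequality behind the `L^p` contractivity of polarization. -/
theorem max_min_rpow_inequality (a b c d p : ℝ) (hp : 1 ≤ p) :
    |max a b - max c d| ^ p + |min a b - min c d| ^ p
      ≤ |a - c| ^ p + |b - d| ^ p := by
  rcases le_total a b with hab | hab <;> rcases le_total c d with hcd | hcd
  · rw [max_eq_right hab, max_eq_right hcd, min_eq_left hab, min_eq_left hcd, add_comm]
  · -- a ≤ b, d ≤ c : use key with u = b - d, v = a - c, e = c - d
    rw [max_eq_right hab, max_eq_left hcd, min_eq_left hab, min_eq_right hcd]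
    have := key_rpow hp (b - d) (a - c) (c - d) (by linarith) (by linarith)
    have e1 : b - d - (c - d) = b - c := by ring
    have e2 : a - c + (c - d) = a - d := by ring
    rw [e1, e2] at this
    linarith
  · -- b ≤ a, c ≤ d : use key with u = a - c, v = b - d, e = d - c
    rw [max_eq_left hab, max_eq_right hcd, min_eq_right hab, min_eq_left hcd]
    have := key_rpow hp (a - c) (b - d) (d - c) (by linarith) (by linarith)
    have e1 : a - c - (d - c) = a - d := by ring
    have e2 : b - d + (d - c) = b - c := by ring
    rw [e1, e2] at this
    linarith
  · rw [max_eq_left hab, max_eq_left hcd, min_eq_right hab, min_eq_right hcd]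
end
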